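/- Continuity and positivity of the expert summary: assume conditions (N1), (Q1), and that for every (u,v) ∈ [0,C]² the map t ↦ ν(u)·G(t)·Φ₀(U(t)) + ν(v)·G(t)·Φ₁(U(t)) is coercive (tends to +∞ as |t| → ∞) and strictly convex on ℝ. Then the map F : [0,C]² → ℝ is continuous, and F(u,v) > 0 for every (u,v) ∈ [0,C]². -/

import Mathlib

/-!
With `f, g ≥ 0`, the map `(a, b) ↦ ⨅ t, a * f t + b * g t` is an infimum of linear functions, hence
concave on the closed quadrant and so continuous on the open one. The expert summary is this map
composed with `(u, v) ↦ (ν u, ν v)`, which is continuous and lands in the open quadrant since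
`ν > 0`. For positivity, a coercive continuous row objective attains its infimum, and it is
positive everywhere.
-/

/-- Logistic envelope `Φ₀(u) = log(1 + e^{-u})`. -/
noncomputable def Phi0 (u : ℝ) : ℝ := Real.log (1 + Real.exp (-u))

/-- Logistic envelope `Φ₁(u) = log(1 + e^{u})`. -/
noncomputable def Phi1 (u : ℝ) : ℝ := Real.log (1 + Real.exp u)

/-- Row objective `t ↦ ν(u)·G(t)·Φ₀(U(t)) + ν(v)·G(t)·Φ₁(U(t))`. -/
noncomputable def rowObj (ν G U : ℝ → ℝ) (u v t : ℝ) : ℝ :=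
  ν u * G t * Phi0 (U t) + ν v * G t * Phi1 (U t)

/-- Expert summary `F(u,v) = inf_t rowObj ν G U u v t`. -/
noncomputable def expertSummary (ν G U : ℝ → ℝ) (u v : ℝ) : ℝ :=
  ⨅ t : ℝ, rowObj ν G U u v t

open Set Filter

lemma Phi0_pos (x : ℝ) : 0 < Phi0 x :=
  Real.log_pos (by linarith [Real.exp_pos (-x)])

lemma Phi1_pos (x : ℝ) : 0 < Phi1 x :=
  Real.log_pos (by linarith [Real.exp_pos x])

lemma continuous_Phi0 : Continuous Phi0 :=
  (Real.continuous_exp.comp continuous_neg).const_add 1 |>.log fun _ =>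
    (add_pos one_pos (Real.exp_pos _)).ne'

lemma continuous_Phi1 : Continuous Phi1 :=
  Real.continuous_exp.const_add 1 |>.log fun _ => (add_pos one_pos (Real.exp_pos _)).ne'

section LowerEnvelope

variable {ι : Type*} [Nonempty ι] {f g : ι → ℝ}

lemma concaveOn_iInf_mul_add_mul (hf : ∀ i, 0 ≤ f i) (hg : ∀ i, 0 ≤ g i) :
    ConcaveOn ℝ (Ici 0 ×ˢ Ici 0) fun p : ℝ × ℝ => ⨅ i, p.1 * f i + p.2 * g i := by
  have hbdd : ∀ p ∈ Ici (0 : ℝ) ×ˢ Ici 0, BddBelow (range fun i => p.1 * f i + p.2 * g i) := by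
    rintro p ⟨hp₁, hp₂⟩
    refine ⟨0, ?_⟩
    rintro _ ⟨i, rfl⟩
    exact add_nonneg (mul_nonneg hp₁ (hf i)) (mul_nonneg hp₂ (hg i))
  refine ⟨(convex_Ici 0).prod (convex_Ici 0), fun p hp q hq a b ha hb _ => le_ciInf fun i => ?_⟩
  calc a • (⨅ i, p.1 * f i + p.2 * g i) + b • (⨅ i, q.1 * f i + q.2 * g i)
      ≤ a • (p.1 * f i + p.2 * g i) + b • (q.1 * f i + q.2 * g i) := by
        gcongr
        exacts [ciInf_le (hbdd p hp) i, ciInf_le (hbdd q hq) i]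
    _ = (a • p + b • q).1 * f i + (a • p + b • q).2 * g i := by
        simp only [Prod.fst_add, Prod.snd_add, Prod.smul_fst, Prod.smul_snd, smul_eq_mul]
        ring

lemma continuousOn_iInf_mul_add_mul (hf : ∀ i, 0 ≤ f i) (hg : ∀ i, 0 ≤ g i) :
    ContinuousOn (fun p : ℝ × ℝ => ⨅ i, p.1 * f i + p.2 * g i) (Ioi 0 ×ˢ Ioi 0) := by
  simpa only [interior_prod_eq, interior_Ici] using
    (concaveOn_iInf_mul_add_mul hf hg).continuousOn_interior

end LowerEnvelope

lemma Continuous.iInf_pos {β : Type*} [TopologicalSpace β] [Nonempty β] {f : β → ℝ}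
    (hf : Continuous f) (hlim : Tendsto f (cocompact β) atTop) (hpos : ∀ x, 0 < f x) :
    0 < ⨅ x, f x := by
  obtain ⟨x₀, hx₀⟩ := hf.exists_forall_le hlim
  exact (hpos x₀).trans_le (le_ciInf hx₀)

section ExpertSummary

variable {ν G U : ℝ → ℝ}

lemma expertSummary_eq_iInf (u v : ℝ) :
    expertSummary ν G U u v = ⨅ t, ν u * (G t * Phi0 (U t)) + ν v * (G t * Phi1 (U t)) := by
  simp only [expertSummary, rowObj, mul_assoc]

lemma continuousOn_expertSummary {s : Set ℝ} (hν : ContinuousOn ν s) (hνpos : ∀ u ∈ s, 0 < ν u)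
    (hG : ∀ t, 0 ≤ G t) :
    ContinuousOn (fun p : ℝ × ℝ => expertSummary ν G U p.1 p.2) (s ×ˢ s) := by
  have hνν : ContinuousOn (fun p : ℝ × ℝ => (ν p.1, ν p.2)) (s ×ˢ s) :=
    (hν.comp continuousOn_fst fun _ hp => hp.1).prodMk (hν.comp continuousOn_snd fun _ hp => hp.2)
  have hcomp := (continuousOn_iInf_mul_add_mul (fun t => mul_nonneg (hG t) (Phi0_pos (U t)).le)
    (fun t => mul_nonneg (hG t) (Phi1_pos (U t)).le)).comp hνν
    fun p hp => ⟨hνpos _ hp.1, hνpos _ hp.2⟩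
  simpa only [expertSummary_eq_iInf, Function.comp_def] using hcomp

lemma rowObj_pos (hGpos : ∀ t, 0 < G t) {u v : ℝ} (hu : 0 < ν u) (hv : 0 < ν v) (t : ℝ) :
    0 < rowObj ν G U u v t := by
  have := Phi0_pos (U t)
  have := Phi1_pos (U t)
  have := hGpos t
  unfold rowObj
  positivity

lemma continuous_rowObj (hG : Continuous G) (hU : Continuous U) (u v : ℝ) :
    Continuous (rowObj ν G U u v) := by
  unfold rowObj
  have := continuous_Phi0.comp hU
  have := continuous_Phi1.comp hU
  fun_prop

end ExpertSummary

theorem expert_summary_continuous_positive_general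
    (C : ℝ)
    -- (N1)
    (ν : ℝ → ℝ)
    (hνcont : ContinuousOn ν (Set.Icc 0 C))
    (hνpos : ∀ u ∈ Set.Icc 0 C, 0 < ν u)
    -- (Q1)
    (G U : ℝ → ℝ)
    (hGcont : Continuous G) (hGpos : ∀ t, 0 < G t)
    (hUcont : Continuous U)
    -- coercivity and strict convexity for every (u,v) ∈ [0,C]²
    (hQ2' : ∀ u ∈ Set.Icc 0 C, ∀ v ∈ Set.Icc 0 C,
      Filter.Tendsto (fun t => rowObj ν G U u v t) (Filter.cocompact ℝ) Filter.atTop ∧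
      StrictConvexOn ℝ Set.univ (fun t => rowObj ν G U u v t)) :
    ContinuousOn (fun p : ℝ × ℝ => expertSummary ν G U p.1 p.2)
        (Set.Icc 0 C ×ˢ Set.Icc 0 C) ∧
    ∀ u ∈ Set.Icc (0 : ℝ) C, ∀ v ∈ Set.Icc (0 : ℝ) C,
      0 < expertSummary ν G U u v := by
  refine ⟨continuousOn_expertSummary hνcont hνpos fun t => (hGpos t).le, fun u hu v hv => ?_⟩
  exact (continuous_rowObj hGcont hUcont u v).iInf_pos (hQ2' u hu v hv).1
    (rowObj_pos hGpos (hνpos u hu) (hνpos v hv))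

/-- **Continuity and positivity of the expert summary.**
Under (N1), (Q1), and coercivity plus strict convexity of the row objective for every
`(u,v) ∈ [0,C]²`, the map `F : [0,C]² → ℝ` is continuous and strictly positive. -/
theorem expert_summary_continuous_positive
    (C : ℝ) (hC : 0 < C)
    -- (N1)
    (ν ν' : ℝ → ℝ)
    (hνcont : ContinuousOn ν (Set.Icc 0 C))
    (hνpos : ∀ u ∈ Set.Icc 0 C, 0 < ν u)
    (hνderiv : ∀ u ∈ Set.Ioo 0 C, HasDerivAt ν (ν' u) u)
    (hν'pos : ∀ u ∈ Set.Ioo 0 C, 0 < ν' u)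
    -- (Q1)
    (G U : ℝ → ℝ)
    (hGcont : Continuous G) (hGpos : ∀ t, 0 < G t)
    (hUcont : Continuous U) (hUmono : StrictMono U) (hUsurj : Function.Surjective U)
    -- coercivity and strict convexity for every (u,v) ∈ [0,C]²
    (hQ2' : ∀ u ∈ Set.Icc 0 C, ∀ v ∈ Set.Icc 0 C,
      Filter.Tendsto (fun t => rowObj ν G U u v t) (Filter.cocompact ℝ) Filter.atTop ∧
      StrictConvexOn ℝ Set.univ (fun t => rowObj ν G U u v t)) :
    ContinuousOn (fun p : ℝ × ℝ => expertSummary ν G U p.1 p.2)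
        (Set.Icc 0 C ×ˢ Set.Icc 0 C) ∧
    ∀ u ∈ Set.Icc (0 : ℝ) C, ∀ v ∈ Set.Icc (0 : ℝ) C,
      0 < expertSummary ν G U u v :=
  expert_summary_continuous_positive_general C ν hνcont hνpos G U hGcont hGpos hUcont hQ2'
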